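/- There exists a constant C_u > 0 such that for every real T ≥ 1, one has T·(cosh(T) − 1) ≤ C_u·(T·sinh(T) − 2·(cosh(T) − 1)); consequently, for T ≥ 1 the optimal control of the double-integrator problem satisfies |u*(t)| ≤ C_u·|q̃|/T for all t ∈ [0, T]. -/

import Mathlib

/-!
Writing `h = T / 2`, the half-angle formulas give `cosh T - 1 = 2 sinh² h` and
`T sinh T - 2 (cosh T - 1) = 4 sinh h (h cosh h - sinh h)`; since `h cosh h - sinh h ≥ h³ / 3`
the denominator is at least `T⁴ / 12`. This settles the bounded range `1 ≤ T ≤ 4`, while for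
`T ≥ 4` the inequality `cosh T - 1 ≤ sinh T` already gives the constant `2`. For the control,
`sinh t sinh T - cosh t (cosh T - 1) = cosh t - cosh (T - t)`, a difference of two values of
`cosh` in `[1, cosh T]`.
-/

open Real

namespace Real

lemma cube_div_three_le_mul_cosh_sub_sinh {x : ℝ} (hx : 0 ≤ x) :
    x ^ 3 / 3 ≤ x * cosh x - sinh x := by
  let f : ℝ → ℝ := fun y => y * cosh y - sinh y - y ^ 3 / 3
  have hf : ∀ y, HasDerivAt f (y * (sinh y - y)) y := fun y => by
    refine ((((hasDerivAt_id' y).mul (hasDerivAt_cosh y)).sub (hasDerivAt_sinh y)).sub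
      ((hasDerivAt_pow 3 y).div_const 3)).congr_deriv ?_
    ring
  have hmono : MonotoneOn f (Set.Ici 0) := by
    refine monotoneOn_of_deriv_nonneg (convex_Ici 0) (by fun_prop)
      (fun y _ => (hf y).differentiableAt.differentiableWithinAt) fun y hy => ?_
    rw [interior_Ici, Set.mem_Ioi] at hy
    rw [(hf y).deriv]
    exact mul_nonneg hy.le (sub_nonneg.2 (self_le_sinh_iff.2 hy.le))
  have := hmono Set.self_mem_Ici hx hx
  norm_num [f] at this
  linarith

lemma cosh_sub_one_eq_two_mul_sinh_half_sq (x : ℝ) : cosh x - 1 = 2 * sinh (x / 2) ^ 2 := by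
  have h := cosh_two_mul (x / 2)
  rw [mul_div_cancel₀ x two_ne_zero, cosh_sq] at h
  linarith

lemma mul_sinh_sub_two_mul_cosh_sub_one_eq (x : ℝ) :
    x * sinh x - 2 * (cosh x - 1) = 4 * sinh (x / 2) * (x / 2 * cosh (x / 2) - sinh (x / 2)) := by
  have h := sinh_two_mul (x / 2)
  rw [mul_div_cancel₀ x two_ne_zero] at h
  rw [cosh_sub_one_eq_two_mul_sinh_half_sq, h]
  ring

lemma pow_four_div_twelve_le_mul_sinh_sub {x : ℝ} (hx : 0 ≤ x) :
    x ^ 4 / 12 ≤ x * sinh x - 2 * (cosh x - 1) := by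
  have hx2 : 0 ≤ x / 2 := by linarith
  have hs : x / 2 ≤ sinh (x / 2) := self_le_sinh_iff.2 hx2
  calc x ^ 4 / 12 = 4 * (x / 2) * ((x / 2) ^ 3 / 3) := by ring
    _ ≤ 4 * sinh (x / 2) * (x / 2 * cosh (x / 2) - sinh (x / 2)) := by
      gcongr
      exact cube_div_three_le_mul_cosh_sub_sinh hx2
    _ = x * sinh x - 2 * (cosh x - 1) := (mul_sinh_sub_two_mul_cosh_sub_one_eq x).symm

lemma mul_cosh_sub_one_le_two_mul_of_four_le {x : ℝ} (hx : 4 ≤ x) :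
    x * (cosh x - 1) ≤ 2 * (x * sinh x - 2 * (cosh x - 1)) := by
  have hcs : cosh x - 1 ≤ sinh x := by
    have := cosh_sub_sinh x
    linarith [exp_le_one_iff.2 (by linarith : -x ≤ 0)]
  have hs : 0 ≤ sinh x := sinh_nonneg_iff.2 (by linarith)
  nlinarith

lemma cosh_le_exp_of_nonneg {x : ℝ} (hx : 0 ≤ x) : cosh x ≤ exp x := by
  rw [cosh_eq]
  linarith [exp_le_exp.2 (by linarith : -x ≤ x)]

lemma mul_cosh_sub_one_le_of_mem_Icc {x : ℝ} (hx : x ∈ Set.Icc (1 : ℝ) 4) :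
    x * (cosh x - 1) ≤ 1000 * (x * sinh x - 2 * (cosh x - 1)) := by
  obtain ⟨h1, h4⟩ := hx
  have hexp : exp x < 81 := calc
    exp x ≤ exp 1 ^ 4 := by rw [← exp_nat_mul]; exact exp_le_exp.2 (by norm_num; linarith)
    _ < 3 ^ 4 := by gcongr; linarith [exp_one_lt_d9]
    _ = 81 := by norm_num
  have hcosh := cosh_le_exp_of_nonneg (by linarith : (0 : ℝ) ≤ x)
  have hD := pow_four_div_twelve_le_mul_sinh_sub (by linarith : (0 : ℝ) ≤ x)
  have hx3 : 1 ≤ x ^ 3 := one_le_pow₀ h1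
  nlinarith

lemma mul_cosh_sub_one_le_of_one_le {x : ℝ} (hx : 1 ≤ x) :
    x * (cosh x - 1) ≤ 1000 * (x * sinh x - 2 * (cosh x - 1)) := by
  rcases le_total x 4 with h4 | h4
  · exact mul_cosh_sub_one_le_of_mem_Icc ⟨hx, h4⟩
  · have hD := pow_four_div_twelve_le_mul_sinh_sub (by linarith : (0 : ℝ) ≤ x)
    have hD0 : 0 ≤ x * sinh x - 2 * (cosh x - 1) := le_trans (by positivity) hD
    linarith [mul_cosh_sub_one_le_two_mul_of_four_le h4]

lemma sinh_mul_sinh_sub_cosh_mul_cosh_sub_one (t x : ℝ) :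
    sinh t * sinh x - cosh t * (cosh x - 1) = cosh t - cosh (x - t) := by
  rw [cosh_sub]
  ring

lemma abs_cosh_sub_cosh_sub_le {t x : ℝ} (ht : t ∈ Set.Icc 0 x) :
    |cosh t - cosh (x - t)| ≤ cosh x - 1 := by
  obtain ⟨ht0, htx⟩ := ht
  have hle : ∀ y, 0 ≤ y → y ≤ x → cosh y ≤ cosh x := fun y hy0 hyx =>
    cosh_le_cosh.2 (by rw [abs_of_nonneg hy0, abs_of_nonneg (hy0.trans hyx)]; exact hyx)
  rw [abs_sub_le_iff]
  constructor
  · linarith [hle t ht0 htx, one_le_cosh (x - t)]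
  · linarith [hle (x - t) (by linarith) (by linarith), one_le_cosh t]

end Real

/-- There exists `C_u > 0` such that for every `T ≥ 1`,
`T (cosh T - 1) ≤ C_u (T sinh T - 2 (cosh T - 1))`; consequently, for `T ≥ 1` the
optimal control `u*(t) = q̃ (sinh t sinh T - cosh t (cosh T - 1)) / (2 (cosh T - 1) - T sinh T)`
satisfies `|u*(t)| ≤ C_u |q̃| / T` on `[0, T]`. -/
theorem optimal_control_hyperbolic_bound :
    ∃ C : ℝ, 0 < C ∧ ∀ T : ℝ, 1 ≤ T →
      T * (Real.cosh T - 1) ≤ C * (T * Real.sinh T - 2 * (Real.cosh T - 1)) ∧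
      ∀ qtilde : ℝ, ∀ t ∈ Set.Icc (0 : ℝ) T,
        |qtilde * (Real.sinh t * Real.sinh T - Real.cosh t * (Real.cosh T - 1)) /
          (2 * (Real.cosh T - 1) - T * Real.sinh T)| ≤ C * |qtilde| / T := by
  refine ⟨1000, by norm_num, fun T hT => ⟨mul_cosh_sub_one_le_of_one_le hT, fun q t ht => ?_⟩⟩
  have hT0 : 0 < T := by linarith
  have hD : 0 < T * sinh T - 2 * (cosh T - 1) :=
    lt_of_lt_of_le (by positivity) (pow_four_div_twelve_le_mul_sinh_sub hT0.le)
  have hN := abs_cosh_sub_cosh_sub_le ht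
  rw [sinh_mul_sinh_sub_cosh_mul_cosh_sub_one, abs_div, abs_mul, abs_sub_comm (2 * _),
    abs_of_pos hD, div_le_div_iff₀ hD hT0]
  calc |q| * |cosh t - cosh (T - t)| * T ≤ |q| * (T * (cosh T - 1)) := by
        rw [mul_assoc, mul_comm _ T]
        gcongr
    _ ≤ |q| * (1000 * (T * sinh T - 2 * (cosh T - 1))) :=
        mul_le_mul_of_nonneg_left (mul_cosh_sub_one_le_of_one_le hT) (abs_nonneg q)
    _ = 1000 * |q| * (T * sinh T - 2 * (cosh T - 1)) := by ring
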